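/- arXiv:2010.06431 — 2 statements merged into one kernel-verified Lean document; each statement's English description precedes it below -/
import Mathlib

section
/- Let d ≥ 1 and let G be a locally finite simple graph on a vertex set V that is bipartite and d-regular. Then there exist d perfect matchings M₁, …, M_d of G that are pairwise orthogonal and whose union is the entire edge set of G. -/
/-!
A `d`-regular graph with `d ≥ 1` satisfies Hall's condition: a finite vertex set `s` sends
`d * |s|` edges into its neighbourhood `N(s)`, which receives at most `d * |N(s)|` edges.
So a bipartite such graph has a perfect matching (Hall's theorem for locally finite graphs,
with Schröder–Bernstein gluing the matchings of the two sides). Deleting it leaves a bipartite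
`(d - 1)`-regular graph, and induction on `d` peels off the `d` matchings one at a time.
-/

open Function

theorem Fin.pairwise_cons {α : Type*} {r : α → α → Prop} [Std.Symm r] {n : ℕ} {a : α}
    {f : Fin n → α} :
    Pairwise (r on (Fin.cons a f : Fin (n + 1) → α)) ↔ (∀ i, r a (f i)) ∧ Pairwise (r on f) := by
  simp only [Pairwise, Fin.forall_fin_succ]
  simp only [ne_eq, not_true_eq_false, onFun, Fin.cons_zero, IsEmpty.forall_iff, Fin.cons_succ,
    true_and, Fin.succ_ne_zero, (Fin.succ_ne_zero _).symm, not_false_eq_true, forall_const,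
    Fin.succ_inj, forall_and]
  exact ⟨fun ⟨h0, _, h⟩ => ⟨h0, h⟩, fun ⟨h0, h⟩ => ⟨h0, fun i => symm (h0 i), h⟩⟩

namespace SimpleGraph

variable {V : Type*} {G : SimpleGraph V}

noncomputable instance [G.LocallyFinite] (s : Set (Sym2 V)) : (G.deleteEdges s).LocallyFinite :=
  fun v => ((G.neighborSet v).toFinite.subset fun _ h => h.1).fintype

lemma IsRegularOfDegree.eq_bot [G.LocallyFinite] (hreg : G.IsRegularOfDegree 0) : G = ⊥ := by
  ext v w
  simpa [hreg v] using fun h : G.Adj v w => (G.degree_pos_iff_exists_adj v).mpr ⟨w, h⟩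

lemma IsRegularOfDegree.deleteEdges_isPerfectMatching [G.LocallyFinite] {d : ℕ}
    (hreg : G.IsRegularOfDegree (d + 1)) {M : G.Subgraph} (hM : M.IsPerfectMatching) :
    (G.deleteEdges M.edgeSet).IsRegularOfDegree d := by
  classical
  intro v
  obtain ⟨w, hw, hw_unique⟩ := Subgraph.isPerfectMatching_iff.mp hM v
  have hneighbors :
      (G.deleteEdges M.edgeSet).neighborFinset v = (G.neighborFinset v).erase w := by
    ext u
    simp only [mem_neighborFinset, Finset.mem_erase, deleteEdges_adj, Subgraph.mem_edgeSet]
    exact ⟨fun ⟨hu, hMu⟩ => ⟨fun h => hMu (h ▸ hw), hu⟩,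
      fun ⟨huw, hu⟩ => ⟨hu, fun hMu => huw (hw_unique u hMu)⟩⟩
  rw [← card_neighborFinset_eq_degree, hneighbors,
    Finset.card_erase_of_mem ((G.mem_neighborFinset _ _).2 (M.adj_sub hw)),
    card_neighborFinset_eq_degree, hreg v, Nat.add_sub_cancel]

lemma IsRegularOfDegree.ncard_le_ncard_iUnion_neighborSet [G.LocallyFinite] {d : ℕ}
    (hreg : G.IsRegularOfDegree d) (hd : 0 < d) (s : Set V) :
    s.ncard ≤ (⋃ x ∈ s, G.neighborSet x).ncard := by
  classical
  obtain hs | hs := s.finite_or_infinite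
  swap; · simp [hs.ncard] -- junk value `s.ncard = 0` for infinite `s`
  lift s to Finset V using hs
  have hN : (⋃ x ∈ (s : Set V), G.neighborSet x) = s.biUnion (G.neighborFinset ·) := by simp
  rw [hN, Set.ncard_coe_finset, Set.ncard_coe_finset]
  refine Nat.le_of_mul_le_mul_right
    (Finset.card_mul_le_card_mul G.Adj (fun a ha => ?_) (fun b _ => ?_)) hd
  · rw [← hreg a, ← card_neighborFinset_eq_degree]
    refine Finset.card_le_card fun b hb => ?_
    rw [mem_neighborFinset] at hb
    simp only [Finset.mem_bipartiteAbove, Finset.mem_biUnion, mem_neighborFinset]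
    exact ⟨⟨a, ha, hb⟩, hb⟩
  · rw [← hreg b, ← card_neighborFinset_eq_degree]
    refine Finset.card_le_card fun a ha => ?_
    rw [Finset.mem_bipartiteBelow] at ha
    exact (G.mem_neighborFinset _ _).2 ha.2.symm

theorem IsBipartite.exists_isPerfectMatching_of_isRegularOfDegree [G.LocallyFinite] {d : ℕ}
    (hbip : G.IsBipartite) (hreg : G.IsRegularOfDegree d) (hd : 0 < d) :
    ∃ M : G.Subgraph, M.IsPerfectMatching :=
  have ⟨_, _, hst⟩ := hbip.exists_isBipartiteWith
  exists_isPerfectMatching_of_forall_ncard_le hst (hreg.ncard_le_ncard_iUnion_neighborSet hd)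

namespace Subgraph

variable {G' : SimpleGraph V}

@[simp]
lemma edgeSet_map_ofLE (h : G' ≤ G) (H : G'.Subgraph) :
    (H.map (Hom.ofLE h)).edgeSet = H.edgeSet := by
  simp [Hom.coe_ofLE]

lemma IsPerfectMatching.map_ofLE {M : G'.Subgraph} (hM : M.IsPerfectMatching) (h : G' ≤ G) :
    (M.map (Hom.ofLE h)).IsPerfectMatching :=
  ⟨hM.1.map_ofLE h, fun v => by simpa [Hom.coe_ofLE] using hM.2 v⟩

end Subgraph

def IsOneFactorization {ι : Type*} (M : ι → G.Subgraph) : Prop :=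
  (∀ i, (M i).IsPerfectMatching) ∧ Pairwise (Disjoint on fun i => (M i).edgeSet) ∧
    ⋃ i, (M i).edgeSet = G.edgeSet

lemma IsOneFactorization.cons {n : ℕ} {M₀ : G.Subgraph} (hM₀ : M₀.IsPerfectMatching)
    {M : Fin n → (G.deleteEdges M₀.edgeSet).Subgraph} (hM : IsOneFactorization M) :
    IsOneFactorization (Fin.cons M₀ fun i => (M i).map (Hom.ofLE (G.deleteEdges_le _)) :
      Fin (n + 1) → G.Subgraph) := by
  obtain ⟨hperf, hdisj, hunion⟩ := hM
  have hrest : ⋃ i, (M i).edgeSet = G.edgeSet \ M₀.edgeSet := by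
    rw [hunion, edgeSet_deleteEdges]
  refine ⟨Fin.forall_fin_succ.2 ⟨hM₀, fun i => (hperf i).map_ofLE _⟩, ?_, ?_⟩
  · change Pairwise (Disjoint on (Subgraph.edgeSet ∘ Fin.cons _ _))
    rw [Fin.comp_cons, Fin.pairwise_cons]
    refine ⟨fun i => ?_, by simpa [Function.comp_def] using hdisj⟩
    simp only [Function.comp_apply, Subgraph.edgeSet_map_ofLE]
    exact Set.disjoint_sdiff_right.mono_right (hrest ▸ Set.subset_iUnion _ i)
  · change ⋃ i, (Subgraph.edgeSet ∘ Fin.cons _ _) i = _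
    rw [Fin.comp_cons, Set.iUnion_cons]
    simp only [Function.comp_apply, Subgraph.edgeSet_map_ofLE, hrest]
    exact Set.union_sdiff_cancel M₀.edgeSet_subset

theorem IsBipartite.exists_isOneFactorization [G.LocallyFinite] (hbip : G.IsBipartite) {d : ℕ}
    (hreg : G.IsRegularOfDegree d) : ∃ M : Fin d → G.Subgraph, IsOneFactorization M := by
  induction d generalizing G with
  | zero => exact ⟨finZeroElim, finZeroElim, fun i => i.elim0, by simp [hreg.eq_bot]⟩
  | succ d ih =>
    obtain ⟨M₀, hM₀⟩ := hbip.exists_isPerfectMatching_of_isRegularOfDegree hreg d.succ_pos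
    obtain ⟨M, hM⟩ := ih (hbip.mono_left (G.deleteEdges_le _))
      (hreg.deleteEdges_isPerfectMatching hM₀)
    exact ⟨_, hM.cons hM₀⟩

end SimpleGraph

theorem bipartite_regular_edge_decomposition_into_matchings_general {V : Type*} (G : SimpleGraph V)
    [G.LocallyFinite] (d : ℕ) (hbip : G.Colorable 2)
    (hreg : G.IsRegularOfDegree d) :
    ∃ M : Fin d → G.Subgraph,
      (∀ i, (M i).IsPerfectMatching) ∧
      (∀ i j, i ≠ j → Disjoint (M i).edgeSet (M j).edgeSet) ∧
      (⋃ i, (M i).edgeSet) = G.edgeSet := by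
  obtain ⟨M, hperf, hdisj, hunion⟩ := SimpleGraph.IsBipartite.exists_isOneFactorization hbip hreg
  exact ⟨M, hperf, fun _ _ h => hdisj h, hunion⟩

/-- A locally finite bipartite `d`-regular simple graph (`d ≥ 1`) has
`d` pairwise orthogonal (edge-disjoint) perfect matchings whose union is the whole edge set. -/
theorem bipartite_regular_edge_decomposition_into_matchings {V : Type*} (G : SimpleGraph V)
    [G.LocallyFinite] (d : ℕ) (hd : 1 ≤ d) (hbip : G.Colorable 2)
    (hreg : G.IsRegularOfDegree d) :
    ∃ M : Fin d → G.Subgraph,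
      (∀ i, (M i).IsPerfectMatching) ∧
      (∀ i j, i ≠ j → Disjoint (M i).edgeSet (M j).edgeSet) ∧
      (⋃ i, (M i).edgeSet) = G.edgeSet :=
  bipartite_regular_edge_decomposition_into_matchings_general G d hbip hreg
end

section
/- Let d ≥ 0 and let G be a connected locally finite (2d+1)-regular simple graph on vertex set V. Then G has a perfect matching if and only if G admits a Schreier structure. (Equivalently: a connected (2d+1)-regular graph is isomorphic to a Schreier graph if and only if it is matchable.) -/
/-!
If `G` carries a Schreier structure, inversion is an involution of the generating set `S`, which
has odd size `2d + 1`, so it fixes some `s ∈ S`; then `x ↦ s • x` is an involution along edges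
without fixed points, i.e. a perfect matching.

Conversely, a perfect matching is such an involution `m`, and deleting its edges leaves a
`2d`-regular graph. Matching every edge with a pair (endpoint, colour in `Fin d`), possible by
Hall's theorem for regular bipartite graphs (Schröder–Bernstein handles infinite sides), orients
it with all in- and out-degrees `d`; the out-neighbour relation is again regular bipartite and
splits into `d` permutations `σᵢ`. Then `{m} ∪ {σᵢ^{±1}}` generates `G` as a Schreier graph of
`Equiv.Perm V`; a connected locally finite graph is countable, so this group can be shrunk into
any universe.
-/

/-- A Schreier structure on a simple graph `G` with vertex set `V`: a group `Γ` acting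
transitively on `V` (the action being given by the homomorphism `act : Γ →* Equiv.Perm V`),
together with a finite symmetric subset `S ⊆ Γ` with `1 ∉ S`, such that for every vertex `x`
the map `s ↦ s • x` is a bijection from `S` onto the neighborhood of `x` in `G`. -/
structure SchreierStructure {V : Type*} (G : SimpleGraph V) where
  Γ : Type*
  [grp : Group Γ]
  act : Γ →* Equiv.Perm V
  S : Finset Γ
  symm : ∀ s ∈ S, s⁻¹ ∈ S
  one_not_mem : (1 : Γ) ∉ S
  transitive : ∀ x y : V, ∃ g : Γ, act g x = y
  bijOn : ∀ x : V, Set.BijOn (fun s : Γ => act s x) (S : Set Γ) (G.neighborSet x)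

open Function Finset

section

universe u w

variable {α β : Type*} {V : Type u}

theorem card_le_card_biUnion_of_regular [DecidableEq β] {k : ℕ} (hk : 0 < k)
    {t : α → Finset β} {t' : β → Finset α} (hmem : ∀ a b, b ∈ t a ↔ a ∈ t' b)
    (ht : ∀ a, #(t a) = k) (ht' : ∀ b, #(t' b) ≤ k) (s : Finset α) :
    #s ≤ #(s.biUnion t) := by
  refine Nat.le_of_mul_le_mul_right ?_ hk
  refine card_mul_le_card_mul (fun a b => b ∈ t a) (fun a ha => ?_) fun b _ => ?_
  · rw [← ht a]
    exact card_le_card fun b hb => (mem_bipartiteAbove _).2 ⟨mem_biUnion.2 ⟨a, ha, hb⟩, hb⟩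
  · exact (card_le_card fun a ha => (hmem a b).1 ((mem_bipartiteBelow _).1 ha).2).trans (ht' b)

theorem exists_bijective_of_regular {k : ℕ} (hk : 0 < k) {t : α → Finset β}
    {t' : β → Finset α} (hmem : ∀ a b, b ∈ t a ↔ a ∈ t' b) (ht : ∀ a, #(t a) = k)
    (ht' : ∀ b, #(t' b) = k) :
    ∃ f : α → β, Bijective f ∧ ∀ a, f a ∈ t a := by
  classical
  obtain ⟨f, hf, hft⟩ := (all_card_le_biUnion_card_iff_exists_injective t).1
    (card_le_card_biUnion_of_regular hk hmem ht fun b => (ht' b).le)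
  obtain ⟨g, hg, hgt⟩ := (all_card_le_biUnion_card_iff_exists_injective t').1
    (card_le_card_biUnion_of_regular hk (fun b a => (hmem a b).symm) ht' fun a => (ht a).le)
  exact Embedding.schroeder_bernstein_of_rel hf hg (fun a b => b ∈ t a) hft
    fun b => (hmem _ b).2 (hgt b)

theorem exists_perms_of_regular_digraph (k : ℕ) (Out In : V → Finset V)
    (hmem : ∀ x y, y ∈ Out x ↔ x ∈ In y) (hOut : ∀ x, #(Out x) = k) (hIn : ∀ y, #(In y) = k) :
    ∃ σ : Fin k → Equiv.Perm V, (∀ i x, σ i x ∈ Out x) ∧ ∀ x y, y ∈ Out x → ∃ i, σ i x = y := by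
  classical
  induction k generalizing Out In with
  | zero =>
    exact ⟨Fin.elim0, fun i => i.elim0, fun x y hy => by simp [card_eq_zero.1 (hOut x)] at hy⟩
  | succ k ih =>
    obtain ⟨f, hf, hfOut⟩ := exists_bijective_of_regular k.succ_pos hmem hOut hIn
    let e := Equiv.ofBijective f hf
    have heOut : ∀ x, e x ∈ Out x := hfOut
    have heIn : ∀ y, e.symm y ∈ In y := fun y =>
      (hmem _ y).1 (by simpa using heOut (e.symm y))
    have hmem' : ∀ x y, y ∈ (Out x).erase (e x) ↔ x ∈ (In y).erase (e.symm y) := by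
      intro x y
      rw [mem_erase, mem_erase, hmem, Ne, Ne, e.eq_symm_apply, eq_comm (a := e x)]
    obtain ⟨σ, hσOut, hσcover⟩ := ih _ _ hmem'
      (fun x => by rw [card_erase_of_mem (heOut x), hOut, Nat.add_sub_cancel])
      (fun y => by rw [card_erase_of_mem (heIn y), hIn, Nat.add_sub_cancel])
    refine ⟨Fin.cons e σ, fun i x => ?_, fun x y hy => ?_⟩
    · cases i using Fin.cases with
      | zero => exact heOut x
      | succ i => exact mem_of_mem_erase (hσOut i x)
    · by_cases hxy : y = e x
      · exact ⟨0, hxy.symm⟩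
      · obtain ⟨i, hi⟩ := hσcover x y (mem_erase.2 ⟨hxy, hy⟩)
        exact ⟨i.succ, hi⟩

/-- `S` makes `G` the Schreier graph of `Equiv.Perm V` acting on `V`; transitivity is automatic
for the full permutation group. -/
structure IsSchreierPermSet (G : SimpleGraph V) (S : Finset (Equiv.Perm V)) : Prop where
  inv_mem : ∀ s ∈ S, s⁻¹ ∈ S
  bijOn : ∀ x, Set.BijOn (fun s : Equiv.Perm V => s x) S (G.neighborSet x)

namespace SimpleGraph

variable {H : SimpleGraph V} [H.LocallyFinite] {d : ℕ}

theorem IsRegularOfDegree.exists_edgeSet_equiv_prod_fin (hreg : H.IsRegularOfDegree (2 * d))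
    (hd : 0 < d) : ∃ e : H.edgeSet ≃ V × Fin d, ∀ ε, (e ε).1 ∈ ε.1 := by
  classical
  obtain ⟨F, hF, hFmem⟩ := exists_bijective_of_regular (k := 2 * d) (by omega)
    (t := fun e : H.edgeSet => e.1.toFinset ×ˢ (univ : Finset (Fin d)))
    (t' := fun p => (H.incidenceFinset p.1).subtype (· ∈ H.edgeSet))
    (fun e p => by simp [Sym2.mem_toFinset, incidenceSet, e.2])
    (fun e => by
      rw [card_product, Sym2.card_toFinset_of_not_isDiag _ (H.not_isDiag_of_mem_edgeSet e.2),
        card_univ, Fintype.card_fin])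
    (fun p => by
      rw [card_subtype, filter_true_of_mem fun e he =>
        H.incidenceSet_subset _ ((H.mem_incidenceFinset _ _).1 he),
        card_incidenceFinset_eq_degree, hreg])
  exact ⟨.ofBijective F hF, fun ε => Sym2.mem_toFinset.1 (mem_product.1 (hFmem ε)).1⟩

theorem IsRegularOfDegree.exists_orientation (hreg : H.IsRegularOfDegree (2 * d)) :
    ∃ Out : V → Finset V, (∀ x, #(Out x) = d) ∧ (∀ x y, y ∈ Out x → x ∉ Out y) ∧
      ∀ x y, H.Adj x y ↔ y ∈ Out x ∨ x ∈ Out y := by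
  classical
  rcases d.eq_zero_or_pos with rfl | hd
  · refine ⟨fun _ => ∅, fun _ => rfl, by simp, fun x y => ?_⟩
    have h0 : H.neighborFinset x = ∅ :=
      card_eq_zero.1 ((H.card_neighborFinset_eq_degree x).trans (hreg x))
    rw [← mem_neighborFinset, h0]
    simp
  -- `e` gives every edge a tail and a colour, each (vertex, colour) pair being used once.
  obtain ⟨e, htail⟩ := hreg.exists_edgeSet_equiv_prod_fin hd
  have hmem : ∀ x i, x ∈ (e.symm (x, i)).1 := fun x i => by
    simpa using htail (e.symm (x, i))
  let o : V → Fin d → V := fun x i => Sym2.Mem.other (hmem x i)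
  have ho : ∀ x i, s(x, o x i) = (e.symm (x, i)).1 := fun x i => Sym2.other_spec _
  have hadj : ∀ x i, H.Adj x (o x i) := fun x i => by
    rw [← mem_edgeSet, ho]; exact (e.symm (x, i)).2
  have ho_inj : ∀ x, Injective (o x) := fun x i j hij => by
    have := e.symm.injective (Subtype.ext (by rw [← ho, ← ho, hij]) :
      e.symm (x, i) = e.symm (x, j))
    simpa using this
  refine ⟨fun x => univ.image (o x), fun x => ?_, ?_, fun x y => ⟨fun hxy => ?_, ?_⟩⟩
  · rw [card_image_of_injective _ (ho_inj x), card_univ, Fintype.card_fin]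
  · simp only [mem_image, mem_univ, true_and, not_exists]
    rintro x _ ⟨i, rfl⟩ j hj
    have : e.symm (x, i) = e.symm (o x i, j) := Subtype.ext (by rw [← ho, ← ho, hj, Sym2.eq_swap])
    exact (hadj x i).ne (congrArg Prod.fst (e.symm.injective this))
  · simp only [mem_image, mem_univ, true_and]
    obtain ⟨⟨z, i⟩, hzi⟩ : ∃ p, e ⟨s(x, y), hxy⟩ = p := ⟨_, rfl⟩
    have hz := htail ⟨s(x, y), hxy⟩
    rw [hzi, Sym2.mem_iff] at hz
    have hedge : s(z, o z i) = s(x, y) := by rw [ho, ← hzi, e.symm_apply_apply]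
    rcases hz with rfl | rfl
    · exact Or.inl ⟨i, Sym2.congr_right.1 hedge⟩
    · exact Or.inr ⟨i, Sym2.congr_right.1 (hedge.trans Sym2.eq_swap)⟩
  · simp only [mem_image, mem_univ, true_and]
    rintro (⟨i, rfl⟩ | ⟨i, rfl⟩)
    exacts [hadj x i, (hadj y i).symm]

theorem IsRegularOfDegree.exists_isSchreierPermSet
    (hreg : H.IsRegularOfDegree (2 * d)) : ∃ S, IsSchreierPermSet H S := by
  classical
  obtain ⟨Out, hOut, hasymm, hadj⟩ := hreg.exists_orientation
  let In : V → Finset V := fun y => (H.neighborFinset y).filter (y ∈ Out ·)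
  have hmem : ∀ x y, y ∈ Out x ↔ x ∈ In y := fun x y => by
    simp only [In, mem_filter, mem_neighborFinset, hadj y x, iff_and_self]
    exact Or.inr
  have hIn : ∀ y, #(In y) = d := fun y => by
    have hunion : Out y ∪ In y = H.neighborFinset y := by
      ext x
      rw [mem_union, ← hmem, mem_neighborFinset, hadj]
    have hdisj : Disjoint (Out y) (In y) :=
      Finset.disjoint_left.2 fun x hx hx' => hasymm y x hx ((hmem _ _).2 hx')
    have := card_union_of_disjoint hdisj
    rw [hunion, card_neighborFinset_eq_degree, hreg, hOut] at this
    omega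
  obtain ⟨σ, hσOut, hσcover⟩ := exists_perms_of_regular_digraph d Out In hmem hOut hIn
  have hσ : ∀ x y, y ∈ Out x ↔ ∃ i, σ i x = y := fun x y =>
    ⟨hσcover x y, fun ⟨i, hi⟩ => hi ▸ hσOut i x⟩
  refine ⟨univ.image σ ∪ univ.image fun i => (σ i)⁻¹, ⟨?_, fun x => ?_⟩⟩
  · simp only [mem_union, mem_image, mem_univ, true_and]
    rintro s (⟨i, rfl⟩ | ⟨i, rfl⟩)
    exacts [Or.inr ⟨i, rfl⟩, Or.inl ⟨i, inv_inv _⟩]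
  -- The `2d` permutations reach all `2d` neighbours, so they do so injectively.
  rw [← coe_neighborFinset, ← image_eq_iff_bijOn_of_card]
  · ext y
    simp only [mem_image, mem_union, mem_univ, true_and, mem_neighborFinset, hadj, hσ,
      or_and_right, exists_or, exists_exists_eq_and, Equiv.Perm.inv_eq_iff_eq, eq_comm (a := x)]
  · calc _ ≤ #(univ.image σ) + #(univ.image fun i => (σ i)⁻¹) := card_union_le _ _
      _ ≤ d + d := by gcongr <;> exact card_image_le.trans_eq (card_fin d)
      _ = #(H.neighborFinset x) := by rw [card_neighborFinset_eq_degree, hreg, two_mul]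

end SimpleGraph

open Classical in
theorem IsSchreierPermSet.insert {G H : SimpleGraph V} {S : Finset (Equiv.Perm V)}
    (hS : IsSchreierPermSet H S) {f : Equiv.Perm V} (hf : f⁻¹ = f)
    (hN : ∀ x, G.neighborSet x = insert (f x) (H.neighborSet x))
    (hfN : ∀ x, f x ∉ H.neighborSet x) : IsSchreierPermSet G (insert f S) := by
  refine ⟨?_, fun x => ?_⟩
  · simp only [mem_insert]
    rintro s (rfl | hs)
    exacts [Or.inl hf, Or.inr (hS.inv_mem s hs)]
  · rw [coe_insert, hN]
    exact (hS.bijOn x).insert (hfN x)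

namespace SimpleGraph

variable {G : SimpleGraph V} [G.LocallyFinite]

theorem IsRegularOfDegree.exists_isSchreierPermSet_of_involutive {d : ℕ}
    (hreg : G.IsRegularOfDegree (2 * d + 1)) {f : V → V} (hf : Involutive f)
    (hadj : ∀ x, G.Adj x (f x)) : ∃ S, IsSchreierPermSet G S := by
  classical
  let H := G.deleteEdges (Set.range fun x => s(x, f x))
  have hHadj : ∀ x y, H.Adj x y ↔ G.Adj x y ∧ y ≠ f x := fun x y => by
    simp only [H, deleteEdges_adj, Set.mem_range, Sym2.eq_iff, not_exists]
    refine and_congr_right fun _ => ⟨fun h hy => h x (Or.inl ⟨rfl, hy.symm⟩), ?_⟩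
    rintro hy z (⟨rfl, h⟩ | ⟨rfl, h⟩)
    exacts [hy h.symm, hy (by rw [← h, hf])]
  have hN : ∀ x, G.neighborSet x = insert (f x) (H.neighborSet x) := fun x => by
    ext y
    by_cases hy : y = f x
    · simp [hy, hadj x]
    · simp [hy, hHadj]
  have hfN : ∀ x, f x ∉ H.neighborSet x := fun x => by simp [hHadj]
  have : H.LocallyFinite := fun x =>
    ((G.neighborSet x).toFinite.subset fun y hy => ((hHadj x y).1 hy).1).fintype
  have hHreg : H.IsRegularOfDegree (2 * d) := fun x => by
    have hfin : G.neighborFinset x = insert (f x) (H.neighborFinset x) :=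
      coe_injective (by push_cast [coe_neighborFinset]; exact hN x)
    have := G.card_neighborFinset_eq_degree x
    rw [hfin, card_insert_of_notMem (by simpa using hfN x), card_neighborFinset_eq_degree,
      hreg x] at this
    omega
  obtain ⟨S, hS⟩ := hHreg.exists_isSchreierPermSet
  exact ⟨_, hS.insert (f := hf.toPerm f) (Equiv.ext fun x => by simp) hN hfN⟩

theorem Connected.countable (hG : G.Connected) : Countable V := by
  obtain ⟨x₀⟩ := hG.nonempty
  have hfin : ∀ n u, {v | ∃ p : G.Walk u v, p.length = n}.Finite := by
    intro n
    induction n with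
    | zero =>
      intro u
      refine (Set.finite_singleton u).subset ?_
      rintro v ⟨p, hp⟩
      cases p with
      | nil => rfl
      | cons _ _ => simp at hp
    | succ n ih =>
      intro u
      refine ((G.neighborSet u).toFinite.biUnion fun a _ => ih a).subset ?_
      rintro v ⟨p, hp⟩
      cases p with
      | nil => simp at hp
      | cons h q => exact Set.mem_biUnion h ⟨q, by simpa using hp⟩
  have huniv : ⋃ n, {v | ∃ p : G.Walk x₀ v, p.length = n} = Set.univ :=
    Set.eq_univ_of_forall fun v => Set.mem_iUnion.2 ⟨_, (hG x₀ v).some, rfl⟩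
  exact Set.countable_univ_iff.1 (huniv ▸ Set.countable_iUnion fun n => (hfin n x₀).countable)

end SimpleGraph

theorem IsSchreierPermSet.nonempty_schreierStructure [Countable V] [Nonempty V]
    {G : SimpleGraph V} {S : Finset (Equiv.Perm V)} (hS : IsSchreierPermSet G S) :
    Nonempty (SchreierStructure.{u, w} G) := by
  classical
  have : Small.{w} V := Countable.toSmall V
  -- `Perm V` may live in a larger universe than `Γ`; countability lets us shrink `V` first.
  let Φ : Equiv.Perm V ≃* Equiv.Perm (Shrink.{w} V) :=
    (equivShrink V : V ≃ Shrink.{w} V).permCongrHom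
  have hbij : ∀ x, Set.BijOn (fun s => Φ.symm s x) (S.map Φ.toEquiv.toEmbedding)
      (G.neighborSet x) := fun x => by
    rw [coe_map]
    exact (hS.bijOn x).comp Φ.toEquiv.bijOn_symm_image
  obtain ⟨x₀⟩ := ‹Nonempty V›
  refine ⟨{ Γ := Equiv.Perm (Shrink.{w} V)
            act := Φ.symm.toMonoidHom
            S := S.map Φ.toEquiv.toEmbedding
            symm := fun s hs => ?_
            one_not_mem := fun h => G.loopless.irrefl x₀ (by simpa using (hbij x₀).mapsTo h)
            transitive := fun x y => ⟨Φ (Equiv.swap x y), by simp⟩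
            bijOn := hbij }⟩
  rw [mem_map_equiv] at hs ⊢
  simpa using hS.inv_mem _ hs

theorem SimpleGraph.exists_isPerfectMatching_iff_exists_involutive {G : SimpleGraph V} :
    (∃ M : G.Subgraph, M.IsPerfectMatching) ↔ ∃ f : V → V, Involutive f ∧ ∀ x, G.Adj x (f x) := by
  constructor
  · rintro ⟨M, hM⟩
    choose f hf huniq using Subgraph.isPerfectMatching_iff.1 hM
    exact ⟨f, fun x => (huniq (f x) x (hf x).symm).symm, fun x => (hf x).adj_sub⟩
  · rintro ⟨f, hf, hadj⟩
    refine ⟨{ verts := Set.univ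
              Adj := fun x y => f x = y
              adj_sub := by rintro x _ rfl; exact hadj x
              edge_vert := fun _ => Set.mem_univ _
              symm := ⟨fun x y h => by rw [← h, hf x]⟩ }, ?_⟩
    exact Subgraph.isPerfectMatching_iff.2 fun x => existsUnique_eq'

theorem Finset.exists_inv_eq_self_of_odd_card {Γ : Type*} [Group Γ] {S : Finset Γ}
    (hS : ∀ s ∈ S, s⁻¹ ∈ S) (hodd : Odd #S) : ∃ s ∈ S, s⁻¹ = s := by
  have hinv : Involutive fun s : S => (⟨s.1⁻¹, hS _ s.2⟩ : S) := fun s => Subtype.ext (inv_inv _)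
  obtain ⟨s, hs⟩ := Equiv.Perm.exists_fixed_point_of_prime (p := 2) (n := 1) (σ := hinv.toPerm)
    (by simpa using hodd.not_two_dvd_nat) (by rw [pow_one, sq]; exact Equiv.ext hinv)
  exact ⟨s, s.2, congrArg Subtype.val hs⟩

theorem SchreierStructure.exists_involutive_adj {G : SimpleGraph V} [G.LocallyFinite]
    (T : SchreierStructure G) {x₀ : V} (hodd : Odd (G.degree x₀)) :
    ∃ f : V → V, Involutive f ∧ ∀ x, G.Adj x (f x) := by
  let := T.grp
  have hcard : #T.S = G.degree x₀ := by
    rw [← G.card_neighborFinset_eq_degree]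
    exact Set.BijOn.finsetCard_eq _ (by rw [SimpleGraph.coe_neighborFinset]; exact T.bijOn x₀)
  obtain ⟨s, hs, hinv⟩ := exists_inv_eq_self_of_odd_card T.symm (hcard ▸ hodd)
  refine ⟨T.act s, fun x => ?_, fun x => (T.bijOn x).mapsTo hs⟩
  have hsq : s * s = 1 := by simpa [hinv] using inv_mul_cancel s
  rw [← Equiv.Perm.mul_apply, ← map_mul, hsq, map_one, Equiv.Perm.one_apply]

end

/-- A connected locally finite `(2d+1)`-regular simple graph has a perfect
matching if and only if it admits a Schreier structure (i.e. iff it is isomorphic to a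
Schreier graph). -/
theorem odd_regular_matchable_iff_schreier {V : Type*} (G : SimpleGraph V)
    [G.LocallyFinite] (d : ℕ) (hconn : G.Connected)
    (hreg : G.IsRegularOfDegree (2 * d + 1)) :
    (∃ M : G.Subgraph, M.IsPerfectMatching) ↔ Nonempty (SchreierStructure G) := by
  obtain ⟨x₀⟩ := hconn.nonempty
  have : Nonempty V := ⟨x₀⟩
  have : Countable V := hconn.countable
  rw [SimpleGraph.exists_isPerfectMatching_iff_exists_involutive]
  constructor
  · rintro ⟨f, hf, hadj⟩
    obtain ⟨S, hS⟩ := hreg.exists_isSchreierPermSet_of_involutive hf hadj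
    exact hS.nonempty_schreierStructure
  · rintro ⟨T⟩
    exact T.exists_involutive_adj (x₀ := x₀) (by rw [hreg x₀]; exact odd_two_mul_add_one d)
end
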